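/- arXiv:1807.10873 — 3 statements merged into one kernel-verified Lean document; each statement's English description precedes it below -/
import Mathlib

section
/- Let V be a p×p real symmetric positive definite matrix and let λ' > 0 be such that wᵀ V⁻¹ w ≥ λ'⁻¹ ‖w‖² for every w ∈ ℝᵖ. Let ν₁,…,ν_p > 0 and a ∈ ℝᵖ. Then ∫_{ℝᵖ} exp(−½ (a−φ)ᵀ V⁻¹ (a−φ)) · ∏_{j=1}^p (2πν_j)^{−1/2} exp(−φ_j²/(2ν_j)) dφ ≤ ∏_{j=1}^p √(λ'/(λ'+ν_j)) · exp(−a_j²/(2(λ'+ν_j))). -/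
/-!
Bounding `V⁻¹` below by `λ'⁻¹ · I` bounds the likelihood factor by the isotropic Gaussian kernel
`∏ⱼ exp(−(aⱼ − φⱼ)²/(2λ'))`. The resulting integrand is a product of one-dimensional functions, so
the integral factorises, and each factor is the convolution of two centred Gaussians, of variances
`λ'` and `νⱼ`, which is a Gaussian of variance `λ' + νⱼ`.
-/

open Matrix Real MeasureTheory

lemma exp_sub_sq_mul_exp_sq_eq {lam ν : ℝ} (hlam : 0 < lam) (hν : 0 < ν) (a x : ℝ) :
    exp (-(a - x) ^ 2 / (2 * lam)) * exp (-x ^ 2 / (2 * ν)) =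
      exp (-a ^ 2 / (2 * (lam + ν))) *
        exp (-((lam + ν) / (2 * lam * ν)) * (x - ν * a / (lam + ν)) ^ 2) := by
  rw [← exp_add, ← exp_add]
  congr 1
  field_simp
  ring

lemma integrable_exp_sub_sq_mul_gaussian {lam ν : ℝ} (hlam : 0 < lam) (hν : 0 < ν) (a : ℝ) :
    Integrable fun x : ℝ ↦
      exp (-(a - x) ^ 2 / (2 * lam)) * ((√(2 * π * ν))⁻¹ * exp (-x ^ 2 / (2 * ν))) := by
  have hb : 0 < (lam + ν) / (2 * lam * ν) := by positivity
  simp_rw [mul_left_comm _ (√(2 * π * ν))⁻¹, exp_sub_sq_mul_exp_sq_eq hlam hν a]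
  exact (((integrable_exp_neg_mul_sq hb).comp_sub_right _).const_mul _).const_mul _

lemma integral_exp_sub_sq_mul_gaussian {lam ν : ℝ} (hlam : 0 < lam) (hν : 0 < ν) (a : ℝ) :
    ∫ x : ℝ, exp (-(a - x) ^ 2 / (2 * lam)) * ((√(2 * π * ν))⁻¹ * exp (-x ^ 2 / (2 * ν))) =
      √(lam / (lam + ν)) * exp (-a ^ 2 / (2 * (lam + ν))) := by
  have hnorm : (√(2 * π * ν))⁻¹ * √(π / ((lam + ν) / (2 * lam * ν))) = √(lam / (lam + ν)) := by
    rw [← sqrt_inv, ← sqrt_mul (by positivity)]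
    congr 1
    field_simp
  simp_rw [mul_left_comm _ (√(2 * π * ν))⁻¹, exp_sub_sq_mul_exp_sq_eq hlam hν a,
    integral_const_mul]
  rw [integral_sub_right_eq_self (fun x ↦ exp (-((lam + ν) / (2 * lam * ν)) * x ^ 2)),
    integral_gaussian, ← hnorm]
  ring

lemma exp_neg_half_le_prod_exp {ι : Type*} [Fintype ι] {lam q : ℝ} {w : ι → ℝ}
    (hq : lam⁻¹ * (w ⬝ᵥ w) ≤ q) :
    exp (-(1 / 2) * q) ≤ ∏ j, exp (-(w j) ^ 2 / (2 * lam)) := by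
  have hsum : ∑ j, -(w j) ^ 2 / (2 * lam) = -(1 / 2) * (lam⁻¹ * (w ⬝ᵥ w)) := by
    simp only [dotProduct, Finset.mul_sum, ← sq]
    refine Finset.sum_congr rfl fun j _ ↦ ?_
    ring
  rw [← exp_sum, hsum]
  exact exp_le_exp.2 (by linarith)

theorem stmt_5_general {p : ℕ} (V : Matrix (Fin p) (Fin p) ℝ)
    (lam' : ℝ) (hlam' : 0 < lam')
    (hbound : ∀ w : Fin p → ℝ, lam'⁻¹ * (w ⬝ᵥ w) ≤ w ⬝ᵥ V⁻¹.mulVec w)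
    (ν : Fin p → ℝ) (hν : ∀ j, 0 < ν j) (a : Fin p → ℝ) :
    (∫ φ : Fin p → ℝ,
        Real.exp (-(1 / 2) * ((a - φ) ⬝ᵥ V⁻¹.mulVec (a - φ))) *
          ∏ j, (Real.sqrt (2 * Real.pi * ν j))⁻¹ * Real.exp (-(φ j) ^ 2 / (2 * ν j))) ≤
      ∏ j, Real.sqrt (lam' / (lam' + ν j)) * Real.exp (-(a j) ^ 2 / (2 * (lam' + ν j))) := by
  set f : Fin p → ℝ → ℝ := fun j x ↦
    exp (-(a j - x) ^ 2 / (2 * lam')) * ((√(2 * π * ν j))⁻¹ * exp (-x ^ 2 / (2 * ν j)))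
  have hprior_nonneg (φ : Fin p → ℝ) :
      0 ≤ ∏ j, (√(2 * π * ν j))⁻¹ * exp (-(φ j) ^ 2 / (2 * ν j)) :=
    Finset.prod_nonneg fun j _ ↦ by positivity
  have hle (φ : Fin p → ℝ) :
      exp (-(1 / 2) * ((a - φ) ⬝ᵥ V⁻¹.mulVec (a - φ))) *
        ∏ j, (√(2 * π * ν j))⁻¹ * exp (-(φ j) ^ 2 / (2 * ν j)) ≤ ∏ j, f j (φ j) :=
    (mul_le_mul_of_nonneg_right (exp_neg_half_le_prod_exp (hbound (a - φ)))
      (hprior_nonneg φ)).trans_eq Finset.prod_mul_distrib.symm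
  calc _ ≤ ∫ φ : Fin p → ℝ, ∏ j, f j (φ j) :=
        integral_mono_of_nonneg (.of_forall fun φ ↦ mul_nonneg (exp_pos _).le (hprior_nonneg φ))
          (Integrable.fintype_prod fun j ↦ integrable_exp_sub_sq_mul_gaussian hlam' (hν j) (a j))
          (.of_forall hle)
    _ = ∏ j, ∫ x, f j x := integral_fintype_prod_eq_prod f
    _ = _ := Finset.prod_congr rfl fun j _ ↦ integral_exp_sub_sq_mul_gaussian hlam' (hν j) (a j)

/-- Upper bound on the spike-and-slab marginal likelihood: if `wᵀ V⁻¹ w ≥ λ'⁻¹ ‖w‖²`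
for all `w`, then
`∫ exp(−½ (a−φ)ᵀ V⁻¹ (a−φ)) ∏ⱼ (2πνⱼ)^{-1/2} exp(−φⱼ²/(2νⱼ)) dφ
  ≤ ∏ⱼ √(λ'/(λ'+νⱼ)) exp(−aⱼ²/(2(λ'+νⱼ)))`. -/
theorem stmt_5 {p : ℕ} (V : Matrix (Fin p) (Fin p) ℝ) (hV : V.PosDef)
    (lam' : ℝ) (hlam' : 0 < lam')
    (hbound : ∀ w : Fin p → ℝ, lam'⁻¹ * (w ⬝ᵥ w) ≤ w ⬝ᵥ V⁻¹.mulVec w)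
    (ν : Fin p → ℝ) (hν : ∀ j, 0 < ν j) (a : Fin p → ℝ) :
    (∫ φ : Fin p → ℝ,
        Real.exp (-(1 / 2) * ((a - φ) ⬝ᵥ V⁻¹.mulVec (a - φ))) *
          ∏ j, (Real.sqrt (2 * Real.pi * ν j))⁻¹ * Real.exp (-(φ j) ^ 2 / (2 * ν j))) ≤
      ∏ j, Real.sqrt (lam' / (lam' + ν j)) * Real.exp (-(a j) ^ 2 / (2 * (lam' + ν j))) :=
  stmt_5_general V lam' hlam' hbound ν hν a
end

section
/- Let 0 < λ_min ≤ λ_max and c > 0, M > 0, M' > 0 be real constants. Let (ν₀ₙ) be a sequence of nonnegative reals with n·ν₀ₙ ≤ M' for all n, let (ν₁ₙ) satisfy ν₁ₙ ≥ c·n for all n, and let (a_n) satisfy n·a_n² ≤ M for all n. Define H_n = √[ (λ_max/n)(λ_min/n + ν₀ₙ) / ((λ_min/n)(λ_max/n + ν₁ₙ)) ] · exp( a_n²/(2(λ_min/n + ν₀ₙ)) − a_n²/(2(λ_max/n + ν₁ₙ)) ). Then the sequence n·H_n is bounded, i.e., H_n = O(1/n). -/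
/-!
Both factors of `Hₙ` are controlled separately. Since `n ν₀ₙ ≤ M'` and `ν₁ₙ ≥ c n`, the
variance ratio under the square root is `O(n⁻²)`, so `n` times its square root stays bounded.
The exponent is at most `aₙ² / (2 λ_min / n) = n aₙ² / (2 λ_min) ≤ M / (2 λ_min)`, so the
exponential factor is bounded as well.
-/

open Real

theorem Real.mul_sqrt_le_sqrt_of_sq_mul_le {x r B : ℝ} (hx : 0 ≤ x) (h : x ^ 2 * r ≤ B) :
    x * √r ≤ √B := by
  rw [← Real.sqrt_sq hx, ← Real.sqrt_mul (sq_nonneg x)]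
  exact Real.sqrt_le_sqrt h

section SpikeSlab

variable {n lmin lmax c M M' v₀ v₁ t a : ℝ}

theorem sq_mul_varianceRatio_le (hn : 0 < n) (hmin : 0 < lmin) (hmax : 0 ≤ lmax) (hc : 0 < c)
    (hv₀ : 0 ≤ v₀) (hnv₀ : n * v₀ ≤ M') (hv₁ : c * n ≤ v₁) :
    n ^ 2 * ((lmax / n) * (lmin / n + v₀) / ((lmin / n) * (lmax / n + v₁))) ≤
      lmax * (lmin + M') / (lmin * c) := by
  have hslab : c ≤ (lmax / n + v₁) / n := by
    rw [le_div_iff₀ hn]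
    have : 0 ≤ lmax / n := by positivity
    linarith
  have hspike : n * (lmin / n + v₀) ≤ lmin + M' := by
    rw [mul_add, mul_div_cancel₀ _ hn.ne']
    linarith
  have hrewrite : n ^ 2 * ((lmax / n) * (lmin / n + v₀) / ((lmin / n) * (lmax / n + v₁))) =
      lmax * (n * (lmin / n + v₀)) / (lmin * ((lmax / n + v₁) / n)) := by
    field_simp
  rw [hrewrite]
  have hbound_nonneg : 0 ≤ lmin + M' := by nlinarith [mul_nonneg hn.le hv₀]
  exact div_le_div₀ (mul_nonneg hmax hbound_nonneg) (mul_le_mul_of_nonneg_left hspike hmax) (by positivity)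
    (mul_le_mul_of_nonneg_left hslab hmin.le)

theorem spikeSlab_exponent_le (hn : 0 < n) (hmin : 0 < lmin) (hv₀ : 0 ≤ v₀) (ht : 0 ≤ t)
    (ha : n * a ^ 2 ≤ M) :
    a ^ 2 / (2 * (lmin / n + v₀)) - a ^ 2 / (2 * t) ≤ M / (2 * lmin) := by
  have hslab : 0 ≤ a ^ 2 / (2 * t) := by positivity
  have hspike : a ^ 2 / (2 * (lmin / n + v₀)) ≤ a ^ 2 / (2 * (lmin / n)) :=
    div_le_div_of_nonneg_left (sq_nonneg a) (by positivity) (by linarith)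
  have hdrop : a ^ 2 / (2 * (lmin / n)) = n * a ^ 2 / (2 * lmin) := by
    field_simp
  have hM : n * a ^ 2 / (2 * lmin) ≤ M / (2 * lmin) :=
    div_le_div_of_nonneg_right ha (by positivity)
  linarith

end SpikeSlab

theorem stmt_10_general (lmin lmax c M M' : ℝ) (h0 : 0 < lmin) (hle : lmin ≤ lmax)
    (hc : 0 < c)
    (ν₀ : ℕ → ℝ) (hν₀0 : ∀ n, 0 ≤ ν₀ n) (hν₀ : ∀ n : ℕ, (n : ℝ) * ν₀ n ≤ M')
    (ν₁ : ℕ → ℝ) (hν₁ : ∀ n : ℕ, c * n ≤ ν₁ n)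
    (a : ℕ → ℝ) (ha : ∀ n : ℕ, (n : ℝ) * (a n) ^ 2 ≤ M) :
    ∃ K : ℝ, ∀ n : ℕ,
      |(n : ℝ) *
        (Real.sqrt ((lmax / n) * (lmin / n + ν₀ n) / ((lmin / n) * (lmax / n + ν₁ n))) *
          Real.exp ((a n) ^ 2 / (2 * (lmin / n + ν₀ n)) -
            (a n) ^ 2 / (2 * (lmax / n + ν₁ n))))| ≤ K := by
  refine ⟨√(lmax * (lmin + M') / (lmin * c)) * exp (M / (2 * lmin)), fun n => ?_⟩
  rcases Nat.eq_zero_or_pos n with rfl | hn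
  · simp only [Nat.cast_zero, zero_mul, abs_zero]
    positivity
  have hn' : (0 : ℝ) < n := by exact_mod_cast hn
  have hmax : 0 ≤ lmax := h0.le.trans hle
  have hslab : 0 ≤ lmax / n + ν₁ n := by
    have : 0 ≤ lmax / n := by positivity
    nlinarith [hν₁ n, mul_pos hc hn']
  rw [abs_of_nonneg (by positivity), ← mul_assoc]
  exact mul_le_mul
    (Real.mul_sqrt_le_sqrt_of_sq_mul_le hn'.le
      (sq_mul_varianceRatio_le hn' h0 hmax hc (hν₀0 n) (hν₀ n) (hν₁ n)))
    (exp_le_exp.2 (spikeSlab_exponent_le hn' h0 (hν₀0 n) (by positivity) (ha n)))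
    (exp_pos _).le (Real.sqrt_nonneg _)

/-- Deterministic version of `Hₙ(1,0) = O(n⁻¹)` in the proof of Theorem 2:
the sequence `n · Hₙ` is bounded. -/
theorem stmt_10 (lmin lmax c M M' : ℝ) (h0 : 0 < lmin) (hle : lmin ≤ lmax)
    (hc : 0 < c) (hM : 0 < M) (hM' : 0 < M')
    (ν₀ : ℕ → ℝ) (hν₀0 : ∀ n, 0 ≤ ν₀ n) (hν₀ : ∀ n : ℕ, (n : ℝ) * ν₀ n ≤ M')
    (ν₁ : ℕ → ℝ) (hν₁ : ∀ n : ℕ, c * n ≤ ν₁ n)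
    (a : ℕ → ℝ) (ha : ∀ n : ℕ, (n : ℝ) * (a n) ^ 2 ≤ M) :
    ∃ K : ℝ, ∀ n : ℕ,
      |(n : ℝ) *
        (Real.sqrt ((lmax / n) * (lmin / n + ν₀ n) / ((lmin / n) * (lmax / n + ν₁ n))) *
          Real.exp ((a n) ^ 2 / (2 * (lmin / n + ν₀ n)) -
            (a n) ^ 2 / (2 * (lmax / n + ν₁ n))))| ≤ K :=
  stmt_10_general lmin lmax c M M' h0 hle hc ν₀ hν₀0 hν₀ ν₁ hν₁ a ha
end

section
/- Let 0 < λ_min ≤ λ_max and c > 0, C > 0, M' > 0 be real constants. Let (ν₀ₙ) be a sequence of nonnegative reals with n·ν₀ₙ ≤ M' for all n, let (ν₁ₙ) satisfy c·n ≤ ν₁ₙ ≤ C·n for all n, and let (a_n) be a sequence of reals converging to some a ≠ 0. Define H_n = √[ (λ_max/n)(λ_min/n + ν₁ₙ) / ((λ_min/n)(λ_max/n + ν₀ₙ)) ] · exp( −a_n²/(2(λ_max/n + ν₀ₙ)) + a_n²/(2(λ_min/n + ν₁ₙ)) ). Then there exists κ > 0 such that e^{κn}·H_n → 0 as n → ∞;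 in particular H_n → 0 exponentially fast. -/
/-!
For `n ≥ 1` write `L = λ_max + M'`. Since `λ_max/n + ν₀ₙ ≤ L/n` and `λ_min/n + ν₁ₙ ≥ c`, the exponent
of `Hₙ` is at most `-aₙ² n/(2L) + aₙ²/(2c)`, and as `aₙ² → a² > 0` this is eventually at most
`-a² n/(4L) + a²/c`. The square-root prefactor only grows polynomially, because its argument is
at most `1 + (C/λ_min) n²`. Hence `Hₙ ≤ K n e^{-2κn}` with `κ = a²/(8L)`, and `e^{κn} Hₙ → 0`.
-/

open Filter Real

section SpikeSlab

variable {lmin lmax c C M' ν₀ ν₁ t α : ℝ}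

lemma spike_slab_ratio_le (h0 : 0 < lmin) (hmax : 0 < lmax) (ht : 0 < t) (hν₀ : 0 ≤ ν₀)
    (hν₁0 : 0 ≤ ν₁) (hν₁ : ν₁ ≤ C * t) :
    lmax / t * (lmin / t + ν₁) / (lmin / t * (lmax / t + ν₀)) ≤ 1 + C / lmin * t ^ 2 := by
  have hspike : lmax / t / (lmax / t + ν₀) ≤ 1 := div_le_one_of_le₀ (by linarith) (by positivity)
  have hslab : (lmin / t + ν₁) / (lmin / t) = 1 + t * ν₁ / lmin := by field_simp
  calc lmax / t * (lmin / t + ν₁) / (lmin / t * (lmax / t + ν₀))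
      = lmax / t / (lmax / t + ν₀) * ((lmin / t + ν₁) / (lmin / t)) := by
        rw [div_mul_div_comm, mul_comm (lmax / t + ν₀)]
    _ ≤ 1 * (1 + t * ν₁ / lmin) := by rw [hslab]; gcongr
    _ ≤ 1 + C / lmin * t ^ 2 := by
        rw [one_mul, div_mul_eq_mul_div, sq, ← mul_assoc, mul_comm C, mul_assoc t]
        gcongr

lemma sqrt_spike_slab_ratio_le (h0 : 0 < lmin) (hmax : 0 < lmax) (ht : 1 ≤ t) (hν₀ : 0 ≤ ν₀)
    (hν₁0 : 0 ≤ ν₁) (hν₁ : ν₁ ≤ C * t) :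
    √(lmax / t * (lmin / t + ν₁) / (lmin / t * (lmax / t + ν₀))) ≤ √(1 + C / lmin) * t := by
  have hratio := spike_slab_ratio_le h0 hmax (by linarith) hν₀ hν₁0 hν₁
  have hpoly : 1 + C / lmin * t ^ 2 ≤ (1 + C / lmin) * t ^ 2 := by nlinarith
  calc √(lmax / t * (lmin / t + ν₁) / (lmin / t * (lmax / t + ν₀)))
      ≤ √((1 + C / lmin) * t ^ 2) := sqrt_le_sqrt (hratio.trans hpoly)
    _ = √(1 + C / lmin) * t := by rw [sqrt_mul' _ (sq_nonneg t), sqrt_sq (by linarith)]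

lemma mul_div_le_div_spike (hmax : 0 < lmax) (ht : 0 < t) (hν₀ : 0 ≤ ν₀) (hM' : t * ν₀ ≤ M')
    (hα : 0 ≤ α) : α * t / (lmax + M') ≤ α / (lmax / t + ν₀) := by
  have hden : lmax / t + ν₀ ≤ (lmax + M') / t := by
    rw [add_div, add_le_add_iff_left, le_div_iff₀ ht, mul_comm]
    exact hM'
  calc α * t / (lmax + M') = α / ((lmax + M') / t) := by rw [div_div_eq_mul_div]
    _ ≤ α / (lmax / t + ν₀) := div_le_div_of_nonneg_left hα (by positivity) hden

lemma div_slab_le (h0 : 0 < lmin) (hc : 0 < c) (ht : 1 ≤ t) (hν₁ : c * t ≤ ν₁) (hα : 0 ≤ α) :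
    α / (lmin / t + ν₁) ≤ α / c := by
  have hct : c ≤ c * t := le_mul_of_one_le_right hc.le ht
  have hlmin : 0 ≤ lmin / t := by positivity
  exact div_le_div_of_nonneg_left hα hc (by linarith)

lemma spike_slab_exponent_le {a : ℝ} (h0 : 0 < lmin) (hmax : 0 < lmax) (hc : 0 < c)
    (ht : 1 ≤ t) (hν₀ : 0 ≤ ν₀) (hM' : t * ν₀ ≤ M') (hν₁ : c * t ≤ ν₁)
    (hαl : a ^ 2 / 2 ≤ α) (hαu : α ≤ 2 * a ^ 2) :
    -α / (2 * (lmax / t + ν₀)) + α / (2 * (lmin / t + ν₁))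
      ≤ -(2 * (a ^ 2 / (8 * (lmax + M'))) * t) + a ^ 2 / c := by
  have hα : 0 ≤ α := (by positivity : 0 ≤ a ^ 2 / 2).trans hαl
  have hL : 0 < lmax + M' := by nlinarith
  have hspike := mul_div_le_div_spike hmax (by linarith) hν₀ hM' hα
  have hslab := div_slab_le h0 hc ht hν₁ hα
  have hlow : a ^ 2 / 2 * t / (lmax + M') ≤ α * t / (lmax + M') := by gcongr
  have hup : α / c ≤ 2 * a ^ 2 / c := by gcongr
  have hκ : 2 * (a ^ 2 / (8 * (lmax + M'))) * t = a ^ 2 / 2 * t / (lmax + M') / 2 := by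
    field_simp; ring
  rw [neg_div, div_mul_eq_div_div_swap, div_mul_eq_div_div_swap, hκ]
  linarith [show 2 * a ^ 2 / c / 2 = a ^ 2 / c by ring]

lemma exp_mul_spike_slab_le {a : ℝ} (h0 : 0 < lmin) (hmax : 0 < lmax) (hc : 0 < c)
    (ht : 1 ≤ t) (hν₀ : 0 ≤ ν₀) (hM' : t * ν₀ ≤ M') (hν₁l : c * t ≤ ν₁) (hν₁u : ν₁ ≤ C * t)
    (hαl : a ^ 2 / 2 ≤ α) (hαu : α ≤ 2 * a ^ 2) :
    exp (a ^ 2 / (8 * (lmax + M')) * t) *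
        (√(lmax / t * (lmin / t + ν₁) / (lmin / t * (lmax / t + ν₀))) *
          exp (-α / (2 * (lmax / t + ν₀)) + α / (2 * (lmin / t + ν₁))))
      ≤ √(1 + C / lmin) * exp (a ^ 2 / c) * (t * exp (-(a ^ 2 / (8 * (lmax + M'))) * t)) := by
  have hν₁0 : 0 ≤ ν₁ := le_trans (by positivity) hν₁l
  have hsqrt := sqrt_spike_slab_ratio_le h0 hmax ht hν₀ hν₁0 hν₁u
  have hexponent := spike_slab_exponent_le h0 hmax hc ht hν₀ hM' hν₁l hαl hαu
  set κ := a ^ 2 / (8 * (lmax + M'))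
  calc exp (κ * t) * (√(lmax / t * (lmin / t + ν₁) / (lmin / t * (lmax / t + ν₀))) *
          exp (-α / (2 * (lmax / t + ν₀)) + α / (2 * (lmin / t + ν₁))))
      = √(lmax / t * (lmin / t + ν₁) / (lmin / t * (lmax / t + ν₀))) *
          exp (κ * t + (-α / (2 * (lmax / t + ν₀)) + α / (2 * (lmin / t + ν₁)))) := by
        rw [exp_add (κ * t)]; ring
    _ ≤ √(1 + C / lmin) * t * exp (a ^ 2 / c + -κ * t) :=
        mul_le_mul hsqrt (exp_le_exp.mpr (by linarith)) (by positivity) (by positivity)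
    _ = √(1 + C / lmin) * exp (a ^ 2 / c) * (t * exp (-κ * t)) := by rw [exp_add]; ring

end SpikeSlab

theorem stmt_11_general (lmin lmax c C M' : ℝ) (h0 : 0 < lmin) (hle : lmin ≤ lmax)
    (hc : 0 < c)
    (ν₀ : ℕ → ℝ) (hν₀0 : ∀ n, 0 ≤ ν₀ n) (hν₀ : ∀ n : ℕ, (n : ℝ) * ν₀ n ≤ M')
    (ν₁ : ℕ → ℝ) (hν₁l : ∀ n : ℕ, c * n ≤ ν₁ n) (hν₁u : ∀ n : ℕ, ν₁ n ≤ C * n)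
    (a : ℕ → ℝ) (alim : ℝ) (halim : alim ≠ 0)
    (ha : Tendsto a atTop (nhds alim)) :
    ∃ κ : ℝ, 0 < κ ∧
      Tendsto (fun n : ℕ =>
        Real.exp (κ * n) *
          (Real.sqrt ((lmax / n) * (lmin / n + ν₁ n) / ((lmin / n) * (lmax / n + ν₀ n))) *
            Real.exp (-(a n) ^ 2 / (2 * (lmax / n + ν₀ n)) +
              (a n) ^ 2 / (2 * (lmin / n + ν₁ n)))))
        atTop (nhds 0) := by
  have hmax : 0 < lmax := h0.trans_le hle
  have hM' : 0 ≤ M' := by simpa using hν₀ 0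
  have hsq : 0 < alim ^ 2 := by positivity
  set κ := alim ^ 2 / (8 * (lmax + M'))
  refine ⟨κ, by positivity, ?_⟩
  have hdecay : Tendsto (fun n : ℕ => √(1 + C / lmin) * exp (alim ^ 2 / c) *
      ((n : ℝ) * exp (-κ * n))) atTop (nhds 0) := by
    simpa using ((tendsto_rpow_mul_exp_neg_mul_atTop_nhds_zero 1 κ (by positivity)).comp
      tendsto_natCast_atTop_atTop).const_mul (√(1 + C / lmin) * exp (alim ^ 2 / c))
  have ha2 : Tendsto (fun n => a n ^ 2) atTop (nhds (alim ^ 2)) := ha.pow 2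
  refine squeeze_zero' (Eventually.of_forall fun n => by positivity) ?_ hdecay
  filter_upwards [ha2.eventually (eventually_ge_nhds (by linarith : alim ^ 2 / 2 < alim ^ 2)),
    ha2.eventually (eventually_le_nhds (by linarith : alim ^ 2 < 2 * alim ^ 2)),
    eventually_ge_atTop 1] with n hαl hαu hn
  exact exp_mul_spike_slab_le h0 hmax hc (by exact_mod_cast hn) (hν₀0 n) (hν₀ n) (hν₁l n)
    (hν₁u n) hαl hαu

/-- Deterministic version of `Hₙ(0,1) = O(exp(−n))` in the proof of Theorem 2:
there exists `κ > 0` with `e^{κn} Hₙ → 0`. -/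
theorem stmt_11 (lmin lmax c C M' : ℝ) (h0 : 0 < lmin) (hle : lmin ≤ lmax)
    (hc : 0 < c) (hC : 0 < C) (hM' : 0 < M')
    (ν₀ : ℕ → ℝ) (hν₀0 : ∀ n, 0 ≤ ν₀ n) (hν₀ : ∀ n : ℕ, (n : ℝ) * ν₀ n ≤ M')
    (ν₁ : ℕ → ℝ) (hν₁l : ∀ n : ℕ, c * n ≤ ν₁ n) (hν₁u : ∀ n : ℕ, ν₁ n ≤ C * n)
    (a : ℕ → ℝ) (alim : ℝ) (halim : alim ≠ 0)
    (ha : Tendsto a atTop (nhds alim)) :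
    ∃ κ : ℝ, 0 < κ ∧
      Tendsto (fun n : ℕ =>
        Real.exp (κ * n) *
          (Real.sqrt ((lmax / n) * (lmin / n + ν₁ n) / ((lmin / n) * (lmax / n + ν₀ n))) *
            Real.exp (-(a n) ^ 2 / (2 * (lmax / n + ν₀ n)) +
              (a n) ^ 2 / (2 * (lmin / n + ν₁ n)))))
        atTop (nhds 0) :=
  stmt_11_general lmin lmax c C M' h0 hle hc ν₀ hν₀0 hν₀ ν₁ hν₁l hν₁u a alim halim ha
end
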